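/- arXiv:2412.06527 — 2 statements merged into one kernel-verified Lean document; each statement's English description precedes it below -/
import Mathlib

section
/- In each of the three cases, the identity B_4 = −X(2B_3 + (1 + r_0)B_2 + r_0·B + r_1) holds in Q[[q]]. -/
/-
The coefficients `c_d` are hypergeometric: `(d+1)⁴ c_{d+1} = r P(d) c_d` for a quartic
`P(d) = d⁴ + 2d³ + (1+r₀)d² + r₀d + r₁`. Since `D` acts on `q^d` by `d`, this recurrence is the
differential equation `(1 − rq) D⁴I₀ = rq (2D³ + (1+r₀)D² + r₀D + r₁) I₀`. Dividing by `I₀` and by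
`1 − rq`, and using `rq/(1 − rq) = Y − 1 = −X`, gives the identity.
-/

open PowerSeries Finset

noncomputable section

/-- The truncated harmonic sum `∑_{m=1}^{n} 1/m`. -/
def harm (n : ℕ) : ℚ := ∑ m ∈ Finset.range n, (1 : ℚ) / (m + 1)

/-- The truncated sum `∑_{m=1}^{n} 1/m^2`. -/
def harm2 (n : ℕ) : ℚ := ∑ m ∈ Finset.range n, (1 : ℚ) / ((m : ℚ) + 1) ^ 2

/-- `c_d = (kd)! / ∏_i (a_i d)!`. -/
def cCoef (a : Fin 5 → ℕ) (k : ℕ) (d : ℕ) : ℚ :=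
  (Nat.factorial (k * d) : ℚ) / ∏ i, (Nat.factorial (a i * d) : ℚ)

/-- `s_d = k·∑_{m=1}^{kd} 1/m − ∑_i a_i·∑_{m=1}^{a_i d} 1/m`. -/
def sCoef (a : Fin 5 → ℕ) (k : ℕ) (d : ℕ) : ℚ :=
  (k : ℚ) * harm (k * d) - ∑ i, (a i : ℚ) * harm (a i * d)

/-- `t_d = k²·∑_{m=1}^{kd} 1/m² − ∑_i a_i²·∑_{m=1}^{a_i d} 1/m²`. -/
def tCoef (a : Fin 5 → ℕ) (k : ℕ) (d : ℕ) : ℚ :=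
  (k : ℚ) ^ 2 * harm2 (k * d) - ∑ i, (a i : ℚ) ^ 2 * harm2 (a i * d)

/-- `I_0 = ∑_{d≥0} c_d q^d`. -/
def I₀ (a : Fin 5 → ℕ) (k : ℕ) : ℚ⟦X⟧ := PowerSeries.mk fun d => cCoef a k d

/-- `I_1 = ∑_{d≥1} c_d s_d q^d` (note `s_0 = 0`). -/
def I₁ (a : Fin 5 → ℕ) (k : ℕ) : ℚ⟦X⟧ := PowerSeries.mk fun d => cCoef a k d * sCoef a k d

/-- `I_2 = ∑_{d≥1} c_d (s_d² − t_d)/2 · q^d`. -/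
def I₂ (a : Fin 5 → ℕ) (k : ℕ) : ℚ⟦X⟧ :=
  PowerSeries.mk fun d => cCoef a k d * (sCoef a k d ^ 2 - tCoef a k d) / 2

/-- The derivation `D = q·d/dq` on `ℚ⟦q⟧`. -/
def Dq (f : ℚ⟦X⟧) : ℚ⟦X⟧ := PowerSeries.X * f.derivativeFun

/-- `I_{11} = 1 + D(I_1/I_0)` (the quotient is `I₁ * I₀⁻¹`, with `I₀` a unit). -/
def I₁₁ (a : Fin 5 → ℕ) (k : ℕ) : ℚ⟦X⟧ := 1 + Dq (I₁ a k * (I₀ a k)⁻¹)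

/-- `I_{22} = 1 + D((D(I_2/I_0) + I_1/I_0)/I_{11})`. -/
def I₂₂ (a : Fin 5 → ℕ) (k : ℕ) : ℚ⟦X⟧ :=
  1 + Dq ((Dq (I₂ a k * (I₀ a k)⁻¹) + I₁ a k * (I₀ a k)⁻¹) * (I₁₁ a k)⁻¹)

/-- `r = k^k / ∏_i a_i^{a_i}`. -/
def rConst (a : Fin 5 → ℕ) (k : ℕ) : ℚ := (k : ℚ) ^ k / ∏ i, (a i : ℚ) ^ (a i)

/-- `Y = (1 − rq)⁻¹`. -/
def Yser (a : Fin 5 → ℕ) (k : ℕ) : ℚ⟦X⟧ :=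
  (1 - PowerSeries.C (rConst a k) * PowerSeries.X)⁻¹

/-- `X = 1 − Y`. -/
def Xser (a : Fin 5 → ℕ) (k : ℕ) : ℚ⟦X⟧ := 1 - Yser a k

/-- The generators `A_m = D^m I_{11} / I_{11}`. -/
def Agen (a : Fin 5 → ℕ) (k : ℕ) (m : ℕ) : ℚ⟦X⟧ := Dq^[m] (I₁₁ a k) * (I₁₁ a k)⁻¹

/-- The generators `B_m = D^m I_0 / I_0`. -/
def Bgen (a : Fin 5 → ℕ) (k : ℕ) (m : ℕ) : ℚ⟦X⟧ := Dq^[m] (I₀ a k) * (I₀ a k)⁻¹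

/-- Fixing one of the three cases `Z_6 ⊂ ℙ(1,1,1,1,2)`, `Z_8 ⊂ ℙ(1,1,1,1,4)`,
`Z_10 ⊂ ℙ(1,1,1,2,5)`. -/
def CaseHyp (a : Fin 5 → ℕ) (k : ℕ) : Prop :=
  (a = ![1, 1, 1, 1, 2] ∧ k = 6) ∨ (a = ![1, 1, 1, 1, 4] ∧ k = 8) ∨
    (a = ![1, 1, 1, 2, 5] ∧ k = 10)


lemma coeff_Dq (f : ℚ⟦X⟧) (n : ℕ) : coeff n (Dq f) = n * coeff n f := by
  cases n with
  | zero => simp [Dq]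
  | succ m =>
    rw [show Dq f = X * derivative ℚ f from rfl, coeff_succ_X_mul, coeff_derivative]
    push_cast
    ring

lemma coeff_iterate_Dq (m : ℕ) (f : ℚ⟦X⟧) (n : ℕ) :
    coeff n (Dq^[m] f) = (n : ℚ) ^ m * coeff n f := by
  induction m with
  | zero => simp
  | succ j ih => rw [Function.iterate_succ_apply', coeff_Dq, ih]; ring

section HypergeometricODE

variable {f : ℚ⟦X⟧} {r b₃ b₂ b₁ b₀ : ℚ}

lemma one_sub_C_mul_X_mul_iterate_Dq_four
    (hrec : ∀ n : ℕ, ((n : ℚ) + 1) ^ 4 * coeff (n + 1) f =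
      r * coeff n f * ((n : ℚ) ^ 4 + b₃ * n ^ 3 + b₂ * n ^ 2 + b₁ * n + b₀)) :
    (1 - C r * X) * Dq^[4] f =
      C r * X * (C b₃ * Dq^[3] f + C b₂ * Dq^[2] f + C b₁ * Dq^[1] f + C b₀ * f) := by
  ext n
  simp only [sub_mul, one_mul, mul_assoc, map_sub, coeff_C_mul]
  cases n with
  | zero => simp only [coeff_zero_X_mul, coeff_iterate_Dq]; simp
  | succ n =>
    simp only [coeff_succ_X_mul, map_add, coeff_C_mul, coeff_iterate_Dq]
    push_cast
    linear_combination hrec n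

lemma iterate_Dq_four_mul_inv
    (hrec : ∀ n : ℕ, ((n : ℚ) + 1) ^ 4 * coeff (n + 1) f =
      r * coeff n f * ((n : ℚ) ^ 4 + b₃ * n ^ 3 + b₂ * n ^ 2 + b₁ * n + b₀))
    (hf : constantCoeff f ≠ 0) :
    Dq^[4] f * f⁻¹ = (1 - C r * X)⁻¹ * (C r * X) *
      (C b₃ * (Dq^[3] f * f⁻¹) + C b₂ * (Dq^[2] f * f⁻¹) + C b₁ * (Dq^[1] f * f⁻¹) + C b₀) := by
  have hu : (1 - C r * X : ℚ⟦X⟧)⁻¹ * (1 - C r * X) = 1 :=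
    PowerSeries.inv_mul_cancel _ (by simp)
  have hff : f * f⁻¹ = 1 := PowerSeries.mul_inv_cancel _ hf
  calc Dq^[4] f * f⁻¹ = (1 - C r * X)⁻¹ * ((1 - C r * X) * Dq^[4] f) * f⁻¹ := by
        rw [← mul_assoc, hu, one_mul]
    _ = _ := by
        rw [one_sub_C_mul_X_mul_iterate_Dq_four hrec]
        linear_combination ((1 - C r * X)⁻¹ * (C r * X) * C b₀) * hff

end HypergeometricODE

lemma neg_Xser (a : Fin 5 → ℕ) (k : ℕ) :
    -Xser a k = (1 - C (rConst a k) * X)⁻¹ * (C (rConst a k) * X) := by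
  have hu : (1 - C (rConst a k) * X : ℚ⟦X⟧)⁻¹ * (1 - C (rConst a k) * X) = 1 :=
    PowerSeries.inv_mul_cancel _ (by simp)
  rw [Xser, Yser]
  linear_combination hu

lemma constantCoeff_I₀ (a : Fin 5 → ℕ) (k : ℕ) : constantCoeff (I₀ a k) = 1 := by
  simp [← coeff_zero_eq_constantCoeff_apply, I₀, cCoef]

lemma cCoef_succ (a : Fin 5 → ℕ) (k d : ℕ) :
    cCoef a k (d + 1) = cCoef a k d * ((k * d + 1).ascFactorial k : ℚ) /
      ∏ i, ((a i * d + 1).ascFactorial (a i) : ℚ) := by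
  simp only [cCoef, mul_add_one, ← Nat.factorial_mul_ascFactorial, Nat.cast_mul,
    Finset.prod_mul_distrib]
  have hfact := fun j : ℕ => (Nat.cast_ne_zero (R := ℚ)).mpr (Nat.factorial_ne_zero j)
  have hasc := fun i j : ℕ => (Nat.cast_ne_zero (R := ℚ)).mpr (Nat.ascFactorial_pos (i + 1) j).ne'
  field_simp

/- After cancelling `(kd+j)/(a_i d+j')` factors, `c_{m+1}/c_m = r ∏_{j ∈ J} (m + j/k) / (m+1)^4`
with `J = {1,2,4,5}, {1,3,5,7}, {1,3,7,9}`; so the quartic is `(m²+m+α)(m²+m+β)` with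
`r₀ = α + β`, `r₁ = αβ`. -/
lemma cCoef_rec (a : Fin 5 → ℕ) (k : ℕ) (r₀ r₁ : ℚ)
    (h : (a = ![1, 1, 1, 1, 2] ∧ k = 6 ∧ r₀ = 13 / 36 ∧ r₁ = 5 / 162) ∨
         (a = ![1, 1, 1, 1, 4] ∧ k = 8 ∧ r₀ = 11 / 32 ∧ r₁ = 105 / 4096) ∨
         (a = ![1, 1, 1, 2, 5] ∧ k = 10 ∧ r₀ = 3 / 10 ∧ r₁ = 189 / 10000)) (m : ℕ) :
    ((m : ℚ) + 1) ^ 4 * cCoef a k (m + 1) =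
      rConst a k * cCoef a k m * ((m : ℚ) ^ 4 + 2 * m ^ 3 + (1 + r₀) * m ^ 2 + r₀ * m + r₁) := by
  rcases h with ⟨rfl, rfl, rfl, rfl⟩ | ⟨rfl, rfl, rfl, rfl⟩ | ⟨rfl, rfl, rfl, rfl⟩ <;>
  · simp only [cCoef_succ, rConst, Fin.prod_univ_five, Nat.ascFactorial_eq_prod_range,
      Finset.prod_range_succ, Finset.prod_range_zero, Matrix.cons_val_zero, Matrix.cons_val_one,
      Matrix.cons_val_two, Matrix.cons_val_three, Matrix.cons_val_four, Matrix.head_cons,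
      Matrix.tail_cons]
    push_cast
    field_simp
    ring

/-- `B₄ = −X(2B₃ + (1 + r₀)B₂ + r₀·B + r₁)` in `ℚ⟦q⟧`. -/
theorem statement_2 (a : Fin 5 → ℕ) (k : ℕ) (r₀ r₁ : ℚ)
    (h : (a = ![1, 1, 1, 1, 2] ∧ k = 6 ∧ r₀ = 13 / 36 ∧ r₁ = 5 / 162) ∨
         (a = ![1, 1, 1, 1, 4] ∧ k = 8 ∧ r₀ = 11 / 32 ∧ r₁ = 105 / 4096) ∨
         (a = ![1, 1, 1, 2, 5] ∧ k = 10 ∧ r₀ = 3 / 10 ∧ r₁ = 189 / 10000)) :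
    Bgen a k 4 =
      -(Xser a k) * (2 * Bgen a k 3 + (1 + PowerSeries.C r₀) * Bgen a k 2 +
        PowerSeries.C r₀ * Bgen a k 1 + PowerSeries.C r₁) := by
  have hrec : ∀ n : ℕ, ((n : ℚ) + 1) ^ 4 * coeff (n + 1) (I₀ a k) =
      rConst a k * coeff n (I₀ a k) * ((n : ℚ) ^ 4 + 2 * n ^ 3 + (1 + r₀) * n ^ 2 + r₀ * n + r₁) := by
    simpa only [I₀, coeff_mk] using cCoef_rec a k r₀ r₁ h
  have hI₀ : constantCoeff (I₀ a k) ≠ 0 := by simp [constantCoeff_I₀]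
  simp only [Bgen, neg_Xser, iterate_Dq_four_mul_inv hrec hI₀, map_add, map_one, map_ofNat]

end
end

section
/- Let R be a commutative ring, z a polynomial variable, and let N^G(z) denote the 4×4 strictly upper triangular matrix over R[z] with first row (0, z·E^G_ψ, z^2·E^G_{φψ}, z^3·E^G_{1ψ²}), second row (0, 0, z·E^G_{φφ}, z^2·E^G_{1φψ}), third row (0, 0, 0, z·E^G_ψ), and fourth row zero; let N(z) be the corresponding matrix built from the ungauged propagators (the case c_{11} = c_{12} = c_2 = c_3 = 0). Then (I − N^G(z)) = (I − N(z))·(I − G(z)), where G(z) is the strictly upper triangular matrix with first row (0, z·c_{11}, z^2·c_2, −z^3(c_{11}c_2 + c_3)), second row (0, 0, z·c_{12}, −z^2(c_{11}c_{12} + c_2)), third row (0, 0, 0, z·c_{11}), and fourth row zero. -/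
open Polynomial

theorem Matrix.one_sub_mul_one_sub_strictUpper_fin_four {S : Type*} [CommRing S]
    (a₁₂ a₁₃ a₁₄ a₂₃ a₂₄ a₃₄ b₁₂ b₁₃ b₁₄ b₂₃ b₂₄ b₃₄ : S) :
    (1 - !![0, a₁₂, a₁₃, a₁₄; 0, 0, a₂₃, a₂₄; 0, 0, 0, a₃₄; 0, 0, 0, 0]) *
        (1 - !![0, b₁₂, b₁₃, b₁₄; 0, 0, b₂₃, b₂₄; 0, 0, 0, b₃₄; 0, 0, 0, 0]) =
      1 - !![0, a₁₂ + b₁₂, a₁₃ + b₁₃ - a₁₂ * b₂₃, a₁₄ + b₁₄ - a₁₂ * b₂₄ - a₁₃ * b₃₄;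
             0, 0, a₂₃ + b₂₃, a₂₄ + b₂₄ - a₂₃ * b₃₄;
             0, 0, 0, a₃₄ + b₃₄;
             0, 0, 0, 0] := by
  ext i j
  fin_cases i <;> fin_cases j <;>
    simp [Matrix.mul_apply, Fin.sum_univ_four, Matrix.one_apply] <;> ring

/-- the gauged upper-triangular matrix factors as
`(I − N^G(z)) = (I − N(z))·(I − G(z))`. -/
theorem statement_9 {R : Type*} [CommRing R] (Eψ Eφφ Eφψ Eψψ c₁₁ c₁₂ c₂ c₃ : R) :
    -- gauged propagators
    let EψG : R := Eψ + c₁₁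
    let EφφG : R := Eφφ + c₁₂
    let EφψG : R := Eφψ - c₁₂ * Eψ + c₂
    let EψψG : R := Eψψ + c₁₂ * Eψ ^ 2 - 2 * c₂ * Eψ + c₃
    let E1φψG : R := -EψG * EφφG - EφψG
    let E1ψ2G : R := -EψG * EφψG - EψψG
    -- ungauged propagators (the case c₁₁ = c₁₂ = c₂ = c₃ = 0)
    let E1φψ : R := -Eψ * Eφφ - Eφψ
    let E1ψ2 : R := -Eψ * Eφψ - Eψψ
    let z : R[X] := Polynomial.X
    let NG : Matrix (Fin 4) (Fin 4) R[X] :=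
      !![0, z * Polynomial.C EψG, z ^ 2 * Polynomial.C EφψG, z ^ 3 * Polynomial.C E1ψ2G;
         0, 0, z * Polynomial.C EφφG, z ^ 2 * Polynomial.C E1φψG;
         0, 0, 0, z * Polynomial.C EψG;
         0, 0, 0, 0]
    let N : Matrix (Fin 4) (Fin 4) R[X] :=
      !![0, z * Polynomial.C Eψ, z ^ 2 * Polynomial.C Eφψ, z ^ 3 * Polynomial.C E1ψ2;
         0, 0, z * Polynomial.C Eφφ, z ^ 2 * Polynomial.C E1φψ;
         0, 0, 0, z * Polynomial.C Eψ;
         0, 0, 0, 0]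
    let G : Matrix (Fin 4) (Fin 4) R[X] :=
      !![0, z * Polynomial.C c₁₁, z ^ 2 * Polynomial.C c₂,
           -(z ^ 3 * Polynomial.C (c₁₁ * c₂ + c₃));
         0, 0, z * Polynomial.C c₁₂, -(z ^ 2 * Polynomial.C (c₁₁ * c₁₂ + c₂));
         0, 0, 0, z * Polynomial.C c₁₁;
         0, 0, 0, 0]
    (1 - NG) = (1 - N) * (1 - G) := by
  intro EψG EφφG EφψG EψψG E1φψG E1ψ2G E1φψ E1ψ2 z NG N G
  rw [Matrix.one_sub_mul_one_sub_strictUpper_fin_four]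
  congr 1
  simp only [NG, EψG, EφφG, EφψG, EψψG, E1φψG, E1ψ2G, E1φψ, E1ψ2, EmbeddingLike.apply_eq_iff_eq,
    Matrix.vecCons_inj, and_true, true_and, map_add, map_sub, map_mul, map_neg, map_pow, map_ofNat]
  refine ⟨⟨?_, ?_, ?_⟩, ⟨?_, ?_⟩, ?_⟩ <;> ring
end
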